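/- arXiv:1902.07556 — 2 statements merged into one kernel-verified Lean document; each statement's English description precedes it below -/
import Mathlib

section
/- Let P_1, ..., P_n be orthogonal projections on a finite-dimensional complex inner product space and let ψ be a unit vector. Define V = (1/n) Σ_i ‖P_i ψ‖² and, for a positive integer t, F = (1/n^t) Σ_{i_1,...,i_t} ‖P_{i_t} ⋯ P_{i_1} ψ‖². Then F ≥ V^(2t−1). -/
/-!
Put `S = ∑ i, P i`, a positive operator with `n V = ⟪ψ, S ψ⟫`, and `m = 2t - 1`.
Expanding `S ^ (t - 1) ψ` into the `n ^ (t - 1)` words `P_{i_{t-1}} ⋯ P_{i_1} ψ` gives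
`⟪ψ, S ^ m ψ⟫ = ∑ i, ‖P i (S ^ (t - 1) ψ)‖²`, which Cauchy–Schwarz bounds by
`n ^ (t - 1) ∑_{i_1, …, i_t} ‖P_{i_t} ⋯ P_{i_1} ψ‖²`.
In an eigenbasis of `S`, Jensen's inequality for `x ↦ x ^ m` with the weights `|⟪e_j, ψ⟫|²`
gives `⟪ψ, S ψ⟫ ^ m ≤ ⟪ψ, S ^ m ψ⟫`.
-/

open Finset

/-- Apply the projections `P (iv 0), P (iv 1), ..., P (iv (t-1))` to `ψ` in this order,
so that the result is `P_{i_t} ⋯ P_{i_1} ψ`. -/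
noncomputable def seqApply {E : Type*} [NormedAddCommGroup E] [InnerProductSpace ℂ E]
    {n t : ℕ} (P : Fin n → (E →ₗ[ℂ] E)) (iv : Fin t → Fin n) (ψ : E) : E :=
  (List.ofFn fun k => P (iv k)).foldl (fun v Q => Q v) ψ

open RCLike
open scoped InnerProductSpace

theorem Fintype.sum_pi_fin_succ_snoc {α M : Type*} [Fintype α] [AddCommMonoid M] {t : ℕ}
    (F : (Fin (t + 1) → α) → M) :
    ∑ f, F f = ∑ g : Fin t → α, ∑ i, F (Fin.snoc g i) :=
  (Fintype.sum_equiv (Fin.snocEquiv fun _ => α) _ _ fun _ => rfl).symm.trans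
    (Fintype.sum_prod_type_right _)

theorem norm_sum_sq_le_card_mul_sum_norm_sq {ι F : Type*} [SeminormedAddCommGroup F]
    (s : Finset ι) (x : ι → F) : ‖∑ i ∈ s, x i‖ ^ 2 ≤ #s * ∑ i ∈ s, ‖x i‖ ^ 2 :=
  (pow_le_pow_left₀ (norm_nonneg _) (norm_sum_le s x) 2).trans (sq_sum_le_card_mul_sum_sq ..)

namespace LinearMap

variable {𝕜 E : Type*} [RCLike 𝕜] [NormedAddCommGroup E] [InnerProductSpace 𝕜 E]
  {T : E →ₗ[𝕜] E}

theorem IsSymmetricProjection.re_inner_apply_self (hT : T.IsSymmetricProjection) (v : E) :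
    re ⟪v, T v⟫_𝕜 = ‖T v‖ ^ 2 :=
  calc re ⟪v, T v⟫_𝕜 = re ⟪v, T (T v)⟫_𝕜 := by rw [← Module.End.mul_apply, hT.isIdempotentElem.eq]
    _ = re ⟪T v, T v⟫_𝕜 := by rw [hT.isSymmetric]
    _ = ‖T v‖ ^ 2 := inner_self_eq_norm_sq _

theorem re_inner_sum_apply_self_of_isSymmetricProjection {ι : Type*} (s : Finset ι)
    {P : ι → E →ₗ[𝕜] E} (hP : ∀ i, (P i).IsSymmetricProjection) (v : E) :
    re ⟪v, (∑ i ∈ s, P i) v⟫_𝕜 = ∑ i ∈ s, ‖P i v‖ ^ 2 := by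
  simp only [sum_apply, inner_sum, map_sum, (hP _).re_inner_apply_self]

theorem IsSymmetric.inner_pow_two_mul_add_one_apply (hT : T.IsSymmetric) (k : ℕ) (v : E) :
    ⟪v, (T ^ (2 * k + 1)) v⟫_𝕜 = ⟪(T ^ k) v, T ((T ^ k) v)⟫_𝕜 := by
  rw [hT.pow k, ← Module.End.mul_apply, ← Module.End.mul_apply, ← pow_succ, ← pow_add]
  ring_nf

variable [FiniteDimensional 𝕜 E] {d : ℕ}

theorem IsSymmetric.eigenvectorBasis_repr_pow_apply (hT : T.IsSymmetric)
    (hd : Module.finrank 𝕜 E = d) (k : ℕ) (v : E) (i : Fin d) :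
    (hT.eigenvectorBasis hd).repr ((T ^ k) v) i =
      (hT.eigenvalues hd i : 𝕜) ^ k * (hT.eigenvectorBasis hd).repr v i := by
  induction k with
  | zero => simp
  | succ k ih =>
    rw [pow_succ', Module.End.mul_apply, hT.eigenvectorBasis_apply_self_apply, ih]
    ring

theorem IsSymmetric.re_inner_pow_apply_eq_sum (hT : T.IsSymmetric)
    (hd : Module.finrank 𝕜 E = d) (k : ℕ) (v : E) :
    re ⟪v, (T ^ k) v⟫_𝕜 =
      ∑ i, ‖(hT.eigenvectorBasis hd).repr v i‖ ^ 2 * hT.eigenvalues hd i ^ k := by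
  rw [← (hT.eigenvectorBasis hd).repr.inner_map_map, PiLp.inner_apply, map_sum]
  refine Finset.sum_congr rfl fun i _ => ?_
  rw [hT.eigenvectorBasis_repr_pow_apply, inner_apply, mul_assoc, mul_conj]
  norm_cast
  exact mul_comm _ _

theorem IsPositive.re_inner_apply_pow_le (hT : T.IsPositive) {v : E} (hv : ‖v‖ = 1) (m : ℕ) :
    re ⟪v, T v⟫_𝕜 ^ m ≤ re ⟪v, (T ^ m) v⟫_𝕜 := by
  let b := hT.isSymmetric.eigenvectorBasis rfl
  have hweights : ∑ i, ‖b.repr v i‖ ^ 2 = 1 := by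
    rw [← EuclideanSpace.norm_sq_eq, b.repr.norm_map, hv, one_pow]
  have hjensen := Real.pow_arith_mean_le_arith_mean_pow univ _ _ (fun i _ => sq_nonneg _)
    hweights (fun i _ => hT.nonneg_eigenvalues rfl i) m
  have hmean := hT.isSymmetric.re_inner_pow_apply_eq_sum rfl 1 v
  rw [pow_one] at hmean
  simpa only [hmean, hT.isSymmetric.re_inner_pow_apply_eq_sum rfl, pow_one] using hjensen

end LinearMap

section seqApply

variable {E : Type*} [NormedAddCommGroup E] [InnerProductSpace ℂ E] {n : ℕ}
  (P : Fin n → (E →ₗ[ℂ] E))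

@[simp]
theorem seqApply_zero (g : Fin 0 → Fin n) (v : E) : seqApply P g v = v := by
  simp [seqApply]

@[simp]
theorem seqApply_snoc {t : ℕ} (g : Fin t → Fin n) (i : Fin n) (v : E) :
    seqApply P (Fin.snoc g i) v = P i (seqApply P g v) := by
  simp only [seqApply, List.ofFn_succ', List.concat_eq_append, List.foldl_append]
  simp

theorem sum_pow_apply_eq_sum_seqApply (k : ℕ) (v : E) :
    ((∑ i, P i) ^ k) v = ∑ g : Fin k → Fin n, seqApply P g v := by
  induction k with
  | zero => simp
  | succ k ih =>
    rw [pow_succ', Module.End.mul_apply, ih, Fintype.sum_pi_fin_succ_snoc]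
    simp [map_sum, LinearMap.sum_apply]

theorem re_inner_sum_pow_apply_le_sum_norm_seqApply_sq
    (hP : ∀ i, (P i).IsSymmetricProjection) (k : ℕ) (v : E) :
    re ⟪v, ((∑ i, P i) ^ (2 * k + 1)) v⟫_ℂ ≤
      n ^ k * ∑ f : Fin (k + 1) → Fin n, ‖seqApply P f v‖ ^ 2 := by
  have hS : (∑ i, P i).IsSymmetric :=
    (LinearMap.isPositive_sum _ fun i _ => (hP i).isPositive).isSymmetric
  calc re ⟪v, ((∑ i, P i) ^ (2 * k + 1)) v⟫_ℂ
      = ∑ i, ‖P i (((∑ i, P i) ^ k) v)‖ ^ 2 := by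
        rw [hS.inner_pow_two_mul_add_one_apply,
          LinearMap.re_inner_sum_apply_self_of_isSymmetricProjection _ hP]
    _ = ∑ i, ‖∑ g : Fin k → Fin n, P i (seqApply P g v)‖ ^ 2 := by
        simp only [sum_pow_apply_eq_sum_seqApply, map_sum]
    _ ≤ ∑ i, n ^ k * ∑ g : Fin k → Fin n, ‖P i (seqApply P g v)‖ ^ 2 := by
        gcongr with i
        simpa using norm_sum_sq_le_card_mul_sum_norm_sq univ
          fun g : Fin k → Fin n => P i (seqApply P g v)
    _ = n ^ k * ∑ f : Fin (k + 1) → Fin n, ‖seqApply P f v‖ ^ 2 := by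
        rw [← mul_sum, Fintype.sum_pi_fin_succ_snoc, sum_comm]
        simp only [seqApply_snoc]

end seqApply

theorem projection_rewinding_general_general
    {E : Type*} [NormedAddCommGroup E] [InnerProductSpace ℂ E] [FiniteDimensional ℂ E]
    {n t : ℕ}
    (P : Fin n → (E →ₗ[ℂ] E))
    (hproj : ∀ i, (P i) ∘ₗ (P i) = P i)
    (hsym : ∀ i, (P i).IsSymmetric)
    (ψ : E) (hψ : ‖ψ‖ = 1) :
    (1 / (n : ℝ) ^ t) * ∑ iv : Fin t → Fin n, ‖seqApply P iv ψ‖ ^ 2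
      ≥ ((1 / (n : ℝ)) * ∑ i, ‖P i ψ‖ ^ 2) ^ (2 * t - 1) := by
  have hP : ∀ i, (P i).IsSymmetricProjection := fun i => ⟨hproj i, hsym i⟩
  have hS : (∑ i, P i).IsPositive := LinearMap.isPositive_sum _ fun i _ => (hP i).isPositive
  obtain _ | k := t
  · simp [hψ]
  have hscale : (1 / (n : ℝ)) ^ (2 * k + 1) * n ^ k = 1 / n ^ (k + 1) := by
    rcases eq_or_ne (n : ℝ) 0 with hn | hn
    · simp [hn]
    · rw [show 2 * k + 1 = (k + 1) + k by ring, pow_add, mul_assoc, ← mul_pow,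
        one_div_mul_cancel hn, one_pow, mul_one, one_div_pow]
  rw [ge_iff_le, show 2 * (k + 1) - 1 = 2 * k + 1 by omega,
    ← LinearMap.re_inner_sum_apply_self_of_isSymmetricProjection _ hP]
  calc ((1 / (n : ℝ)) * re ⟪ψ, (∑ i, P i) ψ⟫_ℂ) ^ (2 * k + 1)
      = (1 / n) ^ (2 * k + 1) * re ⟪ψ, (∑ i, P i) ψ⟫_ℂ ^ (2 * k + 1) := mul_pow ..
    _ ≤ (1 / n) ^ (2 * k + 1) * re ⟪ψ, ((∑ i, P i) ^ (2 * k + 1)) ψ⟫_ℂ := by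
        gcongr
        exact hS.re_inner_apply_pow_le hψ _
    _ ≤ (1 / n) ^ (2 * k + 1) * (n ^ k * ∑ f : Fin (k + 1) → Fin n, ‖seqApply P f ψ‖ ^ 2) := by
        gcongr
        exact re_inner_sum_pow_apply_le_sum_norm_seqApply_sq P hP k ψ
    _ = 1 / n ^ (k + 1) * ∑ f : Fin (k + 1) → Fin n, ‖seqApply P f ψ‖ ^ 2 := by
        rw [← mul_assoc, hscale]

theorem projection_rewinding_general
    {E : Type*} [NormedAddCommGroup E] [InnerProductSpace ℂ E] [FiniteDimensional ℂ E]
    {n t : ℕ} (hn : 0 < n) (ht : 0 < t)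
    (P : Fin n → (E →ₗ[ℂ] E))
    (hproj : ∀ i, (P i) ∘ₗ (P i) = P i)
    (hsym : ∀ i, (P i).IsSymmetric)
    (ψ : E) (hψ : ‖ψ‖ = 1) :
    (1 / (n : ℝ) ^ t) * ∑ iv : Fin t → Fin n, ‖seqApply P iv ψ‖ ^ 2
      ≥ ((1 / (n : ℝ)) * ∑ i, ‖P i ψ‖ ^ 2) ^ (2 * t - 1) :=
  projection_rewinding_general_general P hproj hsym ψ hψ
end

section
/- Let P_1, ..., P_n be orthogonal projections on a finite-dimensional complex inner product space and ψ a unit vector. Then (1/n²) Σ_{i,j} ‖P_j P_i ψ‖² ≥ ((1/n) Σ_i ‖P_i ψ‖²)³. -/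
open Finset RCLike
open scoped InnerProductSpace

/-!
Write `u = ∑ i, P i ψ`, `a = ∑ i, ‖P i ψ‖ ^ 2 = re ⟪ψ, u⟫` and `K = ∑ i, ∑ j, ‖P j (P i ψ)‖ ^ 2`,
so that `a ≤ ‖ψ‖ ‖u‖`. Since each `P j` is a symmetric idempotent,
`‖u‖ ^ 2 = ∑ i, ∑ j, re ⟪P j (P i ψ), P j ψ⟫`, and Cauchy–Schwarz over the pairs `(i, j)` gives
`‖u‖ ^ 4 ≤ n K a`. Hence `a ^ 4 ≤ n ‖ψ‖ ^ 4 K a`, i.e. `a ^ 3 ≤ n ‖ψ‖ ^ 4 K`.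
-/

namespace LinearMap.IsSymmetricProjection

variable {𝕜 E : Type*} [RCLike 𝕜] [NormedAddCommGroup E] [InnerProductSpace 𝕜 E]
  {T : E →ₗ[𝕜] E}

theorem inner_apply_apply (hT : T.IsSymmetricProjection) (x y : E) :
    ⟪T x, T y⟫_𝕜 = ⟪x, T y⟫_𝕜 := by
  rw [hT.isSymmetric, ← Module.End.mul_apply, hT.isIdempotentElem.eq]

theorem norm_apply_sq (hT : T.IsSymmetricProjection) (x : E) :
    ‖T x‖ ^ 2 = re ⟪x, T x⟫_𝕜 := by
  rw [← hT.inner_apply_apply, inner_self_eq_norm_sq]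

end LinearMap.IsSymmetricProjection

section

variable {𝕜 E ι : Type*} [RCLike 𝕜] [NormedAddCommGroup E] [InnerProductSpace 𝕜 E] [Fintype ι]
  {P : ι → E →ₗ[𝕜] E}

theorem sum_norm_apply_sq_le_norm_mul_norm_sum (hP : ∀ i, (P i).IsSymmetricProjection) (ψ : E) :
    ∑ i, ‖P i ψ‖ ^ 2 ≤ ‖ψ‖ * ‖∑ i, P i ψ‖ :=
  calc ∑ i, ‖P i ψ‖ ^ 2 = re ⟪ψ, ∑ i, P i ψ⟫_𝕜 := by
        simp only [inner_sum, map_sum, (hP _).norm_apply_sq]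
    _ ≤ ‖⟪ψ, ∑ i, P i ψ⟫_𝕜‖ := re_le_norm _
    _ ≤ ‖ψ‖ * ‖∑ i, P i ψ‖ := norm_inner_le_norm _ _

theorem norm_sum_apply_sq_le (hP : ∀ i, (P i).IsSymmetricProjection) (ψ : E) :
    ‖∑ i, P i ψ‖ ^ 2 ≤ ∑ i, ∑ j, ‖P j (P i ψ)‖ * ‖P j ψ‖ :=
  calc ‖∑ i, P i ψ‖ ^ 2 = ∑ i, ∑ j, re ⟪P j (P i ψ), P j ψ⟫_𝕜 := by
        simp only [← inner_self_eq_norm_sq (𝕜 := 𝕜), sum_inner, inner_sum, map_sum,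
          (hP _).inner_apply_apply]
        exact sum_comm
    _ ≤ ∑ i, ∑ j, ‖P j (P i ψ)‖ * ‖P j ψ‖ := by
        gcongr
        exact (re_le_norm _).trans (norm_inner_le_norm _ _)

theorem norm_sum_apply_pow_four_le (hP : ∀ i, (P i).IsSymmetricProjection) (ψ : E) :
    ‖∑ i, P i ψ‖ ^ 4 ≤
      Fintype.card ι * (∑ i, ∑ j, ‖P j (P i ψ)‖ ^ 2) * ∑ i, ‖P i ψ‖ ^ 2 := by
  have cauchy_schwarz : (∑ i, ∑ j, ‖P j (P i ψ)‖ * ‖P j ψ‖) ^ 2 ≤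
      (∑ i, ∑ j, ‖P j (P i ψ)‖ ^ 2) * ∑ _i : ι, ∑ j, ‖P j ψ‖ ^ 2 := by
    simpa only [← univ_product_univ, sum_product] using sum_mul_sq_le_sq_mul_sq univ
      (fun p : ι × ι => ‖P p.2 (P p.1 ψ)‖) (fun p => ‖P p.2 ψ‖)
  rw [sum_const, card_univ, nsmul_eq_mul] at cauchy_schwarz
  calc ‖∑ i, P i ψ‖ ^ 4 = (‖∑ i, P i ψ‖ ^ 2) ^ 2 := by ring
    _ ≤ (∑ i, ∑ j, ‖P j (P i ψ)‖ * ‖P j ψ‖) ^ 2 := by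
        gcongr
        exact norm_sum_apply_sq_le hP ψ
    _ ≤ _ := by linarith

theorem sum_norm_apply_sq_pow_three_le (hP : ∀ i, (P i).IsSymmetricProjection) (ψ : E) :
    (∑ i, ‖P i ψ‖ ^ 2) ^ 3 ≤
      Fintype.card ι * ‖ψ‖ ^ 4 * ∑ i, ∑ j, ‖P j (P i ψ)‖ ^ 2 := by
  set a := ∑ i, ‖P i ψ‖ ^ 2
  have ha : 0 ≤ a := by positivity
  have key : a ^ 3 * a ≤ (Fintype.card ι * ‖ψ‖ ^ 4 * ∑ i, ∑ j, ‖P j (P i ψ)‖ ^ 2) * a :=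
    calc a ^ 3 * a = a ^ 4 := by ring
      _ ≤ (‖ψ‖ * ‖∑ i, P i ψ‖) ^ 4 := by
        gcongr
        exact sum_norm_apply_sq_le_norm_mul_norm_sum hP ψ
      _ = ‖ψ‖ ^ 4 * ‖∑ i, P i ψ‖ ^ 4 := by ring
      _ ≤ ‖ψ‖ ^ 4 * (Fintype.card ι * (∑ i, ∑ j, ‖P j (P i ψ)‖ ^ 2) * a) := by
        gcongr
        exact norm_sum_apply_pow_four_le hP ψ
      _ = _ := by ring
  rcases ha.eq_or_lt with ha0 | hapos
  · rw [← ha0, zero_pow three_ne_zero]; positivity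
  · exact le_of_mul_le_mul_right key hapos

end

theorem projection_rewinding_t2_general
    {E : Type*} [NormedAddCommGroup E] [InnerProductSpace ℂ E]
    {n : ℕ}
    (P : Fin n → (E →ₗ[ℂ] E))
    (hproj : ∀ i, (P i) ∘ₗ (P i) = P i)
    (hsym : ∀ i, (P i).IsSymmetric)
    (ψ : E) (hψ : ‖ψ‖ = 1) :
    (1 / (n : ℝ) ^ 2) * ∑ i : Fin n, ∑ j : Fin n, ‖P j (P i ψ)‖ ^ 2
      ≥ ((1 / (n : ℝ)) * ∑ i, ‖P i ψ‖ ^ 2) ^ 3 := by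
  have key := sum_norm_apply_sq_pow_three_le (fun i => ⟨hproj i, hsym i⟩) ψ
  rw [Fintype.card_fin, hψ, one_pow, mul_one] at key
  rcases eq_or_ne n 0 with rfl | hn
  · simp
  · calc ((1 / (n : ℝ)) * ∑ i, ‖P i ψ‖ ^ 2) ^ 3 = (∑ i, ‖P i ψ‖ ^ 2) ^ 3 / n ^ 3 := by ring
      _ ≤ n * (∑ i, ∑ j, ‖P j (P i ψ)‖ ^ 2) / n ^ 3 := by gcongr
      _ = _ := by field_simp

theorem projection_rewinding_t2
    {E : Type*} [NormedAddCommGroup E] [InnerProductSpace ℂ E] [FiniteDimensional ℂ E]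
    {n : ℕ} (hn : 0 < n)
    (P : Fin n → (E →ₗ[ℂ] E))
    (hproj : ∀ i, (P i) ∘ₗ (P i) = P i)
    (hsym : ∀ i, (P i).IsSymmetric)
    (ψ : E) (hψ : ‖ψ‖ = 1) :
    (1 / (n : ℝ) ^ 2) * ∑ i : Fin n, ∑ j : Fin n, ‖P j (P i ψ)‖ ^ 2
      ≥ ((1 / (n : ℝ)) * ∑ i, ‖P i ψ‖ ^ 2) ^ 3 :=
  projection_rewinding_t2_general P hproj hsym ψ hψ
end
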